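/- Let λ be an uncountable regular cardinal, let S ⊆ S^λ_ω be stationary in λ, and let ⟨C_δ : δ ∈ S⟩ be a club-guessing sequence on S. Then for every natural number n and every disjoint type t of length n, there exist γ < δ, both in S, such that C_γ[n] and C_δ[n] are disjoint and tp(C_γ[n], C_δ[n]) = t, where for a set A of ordinals, A[n] denotes the set of the first n elements of A in increasing order. -/

import Mathlib

open Cardinal

/-- `D` is club (closed and unbounded) in the limit ordinal `l`. -/
def IsClubIn (D : Set Ordinal) (l : Ordinal) : Prop :=
  D ⊆ Set.Iio l ∧
  (∀ a < l, ∃ b ∈ D, a < b) ∧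
  (∀ a < l, a ≠ 0 → sSup (D ∩ Set.Iio a) = a → a ∈ D)

/-- `S` is stationary in `l`: it meets every club subset of `l`. -/
def IsStationaryIn (S : Set Ordinal) (l : Ordinal) : Prop :=
  ∀ D : Set Ordinal, IsClubIn D l → (S ∩ D).Nonempty

/-- The order type of a set of ordinals. -/
noncomputable def setOtp (A : Set Ordinal) : Ordinal :=
  Ordinal.type ((· < ·) : A → A → Prop)

/-- `t : 2n → 2` is a disjoint type of length `n`: it takes each of the values `0` and `1`
exactly `n` times. -/
def IsDisjointType (n : ℕ) (t : Fin (2 * n) → Fin 2) : Prop :=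
  (Finset.univ.filter fun i => t i = 0).card = n

/-- `F` is the set of the first `n` elements of `A` (in increasing order). -/
def IsFirstN (A : Set Ordinal) (n : ℕ) (F : Finset Ordinal) : Prop :=
  ↑F ⊆ A ∧ F.card = n ∧ ∀ x ∈ A, x ∉ F → ∀ y ∈ F, y < x

/-- `a` and `b` (each of size `n`) realize the disjoint type `t : 2n → 2`: listing `a ∪ b` in
increasing order as `α₀ < … < α_{2n-1}`, `a = {αᵢ : t i = 0}` and `b = {αᵢ : t i = 1}`. -/
def HasType (n : ℕ) (a b : Finset Ordinal) (t : Fin (2 * n) → Fin 2) : Prop :=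
  a.card = n ∧ b.card = n ∧
    ∃ h : (a ∪ b).card = 2 * n,
      ∀ i : Fin (2 * n), (((a ∪ b).orderIsoOfFin h i : Ordinal) ∈ a ↔ t i = 0)

/-!
Call a finite set `P` of ordinals `0`-extendable when it is the trace `C_γ[n]` of unboundedly
many `γ ∈ S`, and `(r + 1)`-extendable when above every `ζ < λ` there is `ξ < λ` with
`insert ξ P` `r`-extendable. Club guessing makes `∅` `n`-extendable: otherwise let `D` be the
club of those `ε` such that, for every non-extendable finite `P ⊆ ε`, the (bounded) set of
witnesses `γ` resp. `ξ` for `P` lies below `ε`, and take `δ ∈ S` with `C_δ ⊆ D`. Adding the points of `C_δ` one at a time preserves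
non-extendability, so `C_δ[n]` is the trace only of ordinals below the next point of `C_δ`,
which is absurd since it is the trace of `δ`. Now run the two extension games for `∅` side by
side, choosing `2n` increasing points and giving the `i`-th one to the side `t i`: this yields
traces `C_γ[n]` and `C_δ[n]` of type `t`, with `δ` chosen above `γ`.
-/

open Finset

def UnboundedIn (X : Set Ordinal) (L : Ordinal) : Prop :=
  ∀ ζ < L, ∃ x ∈ X, ζ < x

theorem bddAbove_and_csSup_lt_of_not_unboundedIn {X : Set Ordinal} {L : Ordinal}
    (h : ¬ UnboundedIn X L) : BddAbove X ∧ sSup X < L := by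
  simp only [UnboundedIn, not_forall, not_exists, not_and, not_lt] at h
  obtain ⟨ζ, hζL, hζ⟩ := h
  exact ⟨⟨ζ, hζ⟩, (csSup_le' hζ).trans_lt hζL⟩

theorem IsFirstN.exists_insert {A : Set Ordinal} {k : ℕ} {F : Finset Ordinal}
    (hF : IsFirstN A k F) (hA : A.Infinite) :
    ∃ c ∈ A, (∀ y ∈ F, y < c) ∧ IsFirstN A (k + 1) (insert c F) := by
  obtain ⟨hcA, hcF⟩ := csInf_mem (hA.sdiff F.finite_toSet).nonempty
  set c := sInf (A \ ↑F)
  have hFc : ∀ y ∈ F, y < c := hF.2.2 c hcA hcF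
  refine ⟨c, hcA, hFc, ?_, ?_, fun x hxA hx y hy => ?_⟩
  · rw [coe_insert]; exact Set.insert_subset hcA hF.1
  · rw [card_insert_of_notMem hcF, hF.2.1]
  · rw [mem_insert, not_or] at hx
    rcases mem_insert.1 hy with rfl | hy
    · exact (csInf_le' (s := A \ ↑F) ⟨hxA, hx.2⟩).lt_of_ne (Ne.symm hx.1)
    · exact hF.2.2 x hxA hx.2 y hy

theorem IsClubIn.infinite {A : Set Ordinal} {δ : Ordinal} (h : IsClubIn A δ) (hδ : δ ≠ 0) :
    A.Infinite := by
  intro hfin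
  obtain ⟨b, hb, -⟩ := h.2.1 0 (pos_iff_ne_zero.2 hδ)
  obtain ⟨m, hm, hmax⟩ := Set.exists_max_image A id hfin ⟨b, hb⟩
  obtain ⟨c, hc, hmc⟩ := h.2.1 m (h.1 hm)
  exact (hmax c hc).not_gt hmc

theorem mk_prod_finset_Iio_lt {lam : Cardinal.{0}} (hunc : ℵ₀ < lam) {ι : Type} [Countable ι]
    {x : Ordinal.{0}} (hx : x < lam.ord) :
    #(ι × Finset (Set.Iio x)) < lift.{1} lam := by
  have hfin : #(Finset (Set.Iio x)) ≤ max ℵ₀ (lift.{1} x.card) := by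
    rw [← mk_Iio_ordinal]
    exact (mk_le_of_surjective List.toFinset_surjective).trans (mk_list_le_max _)
  have hunc' : ℵ₀ < lift.{1} lam := by simpa using hunc
  rw [mk_prod, lift_uzero]
  refine mul_lt_of_lt hunc'.le ((lift_le.2 mk_le_aleph0).trans_lt (by simpa using hunc))
    (hfin.trans_lt (max_lt hunc' (lift_lt.2 (lt_ord.1 hx))))

theorem isClubIn_closurePoints {lam : Cardinal.{0}} (hlam : lam.IsRegular) (hunc : ℵ₀ < lam)
    {ι : Type} [Countable ι] (f : ι → Finset Ordinal.{0} → Ordinal.{0})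
    (hf : ∀ i P, f i P < lam.ord) :
    IsClubIn {ε | ε < lam.ord ∧ ∀ i P, (∀ p ∈ P, p < ε) → f i P < ε} lam.ord := by
  set L := lam.ord
  have hstep (x : Ordinal) : ∃ y, x < y ∧ (x < L → y < L) ∧
      ∀ i P, (∀ p ∈ P, p < x) → f i P < y := by
    let s : ι × Finset (Set.Iio x) → Ordinal := fun q => f q.1 (q.2.map (.subtype _))
    have hs : BddAbove (Set.range s) := ⟨L, Set.forall_mem_range.2 fun q => (hf _ _).le⟩
    refine ⟨Order.succ (max x (⨆ q, s q)), (le_max_left _ _).trans_lt (Order.lt_succ _),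
      fun hx => (Cardinal.isSuccLimit_ord hlam.aleph0_le).succ_lt (max_lt hx ?_),
      fun i P hP => ?_⟩
    · refine Ordinal.lift_iSup_lt_of_lt_cof ?_ fun q => hf _ _
      rw [← Ordinal.lift_cof, hlam.cof_ord, lift_uzero]
      exact mk_prod_finset_Iio_lt hunc hx
    · calc f i P = s (i, P.subtype (· ∈ Set.Iio x)) :=
            (congrArg (f i) (subtype_map_of_mem hP)).symm
        _ ≤ max x (⨆ q, s q) := (le_ciSup hs _).trans (le_max_right _ _)
        _ < _ := Order.lt_succ _
  choose g hxg hgL hg using hstep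
  refine ⟨fun ε hε => hε.1, fun a ha => ?_,
    fun a haL ha0 hsup => ⟨haL, fun i P hP => ?_⟩⟩
  · have haε : a < Ordinal.nfp g a := (hxg a).trans_le (Ordinal.iterate_le_nfp g a 1)
    refine ⟨Ordinal.nfp g a, ⟨Ordinal.nfp_lt_ord (by rwa [hlam.cof_ord]) hgL ha,
      fun i P hP => ?_⟩, haε⟩
    obtain ⟨n, hn⟩ := Ordinal.lt_nfp_iff.1 ((Finset.sup_lt_iff (bot_lt_of_lt haε)).2 hP)
    calc f i P < g (g^[n] a) := hg _ i P fun p hp => (le_sup (f := id) hp).trans_lt hn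
      _ ≤ Ordinal.nfp g a := by
        rw [← Function.iterate_succ_apply' g]; exact Ordinal.iterate_le_nfp g a _
  · have hPa : P.sup id < a := (Finset.sup_lt_iff (pos_iff_ne_zero.2 ha0)).2 hP
    rw [← hsup] at hPa
    obtain ⟨d, ⟨⟨-, hd⟩, hda⟩, hPd⟩ := exists_lt_of_lt_csSup' hPa
    exact (hd i P fun p hp => (le_sup (f := id) hp).trans_lt hPd).trans hda

section Extendable

variable (T : Finset Ordinal → Set Ordinal) (L : Ordinal)

def extensionSet : ℕ → Finset Ordinal → Set Ordinal
  | 0, P => T P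
  | r + 1, P => {ξ | ξ < L ∧ UnboundedIn (extensionSet r (insert ξ P)) L}

def Extendable (r : ℕ) (P : Finset Ordinal) : Prop :=
  UnboundedIn (extensionSet T L r P) L

def BoundsExtensions (c : Ordinal) : Prop :=
  ∀ r P, (∀ p ∈ P, p < c) → ¬ Extendable T L r P → ∀ x ∈ extensionSet T L r P, x < c

variable {T L}

theorem Extendable.exists_insert {r : ℕ} {P : Finset Ordinal} (h : Extendable T L (r + 1) P)
    {ζ : Ordinal} (hζ : ζ < L) : ∃ ξ, ζ < ξ ∧ ξ < L ∧ Extendable T L r (insert ξ P) :=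
  let ⟨ξ, ⟨hξL, hξ⟩, hζξ⟩ := h ζ hζ
  ⟨ξ, hζξ, hξL, hξ⟩

theorem exists_strictMono_extendable_zero {ι : Type*} [DecidableEq ι] {m : ℕ} (t : Fin m → ι)
    (A : ι → Finset Ordinal) {ζ : Ordinal} (hζ : ζ < L)
    (hA : ∀ j, Extendable T L (univ.filter (t · = j)).card (A j)) :
    ∃ v : Fin m → Ordinal, StrictMono v ∧ (∀ i, ζ < v i) ∧
      ∀ j, Extendable T L 0 (A j ∪ (univ.filter (t · = j)).image v) := by
  induction m generalizing ζ A with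
  | zero => exact ⟨finZeroElim, fun i => i.elim0, fun i => i.elim0, by simpa using hA⟩
  | succ m ih =>
    have hcount (j : ι) : (univ.filter (t · = j)).card =
        (univ.filter fun i : Fin m => t i.succ = j).card + if t 0 = j then 1 else 0 := by
      rw [Fin.card_filter_univ_succ]; split_ifs <;> rfl
    have h0 := hA (t 0)
    rw [hcount, if_pos rfl] at h0
    obtain ⟨ξ, hζξ, hξL, hξ⟩ := h0.exists_insert hζ
    set A' := Function.update A (t 0) (insert ξ (A (t 0)))
    have hA' (j : ι) : Extendable T L (univ.filter fun i : Fin m => t i.succ = j).card (A' j) := by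
      rcases eq_or_ne j (t 0) with rfl | hj
      · simpa [A'] using hξ
      · simpa [A', hj, Ne.symm hj, hcount] using hA j
    obtain ⟨v, hv, hξv, hvA⟩ := ih (fun i : Fin m => t i.succ) A' hξL hA'
    refine ⟨Fin.cons ξ v, Fin.strictMono_cons.2 ⟨hξv, hv⟩,
      Fin.cases hζξ fun i => hζξ.trans (hξv i), fun j => ?_⟩
    have himage : A j ∪ (univ.filter (t · = j)).image (Fin.cons ξ v : Fin (m + 1) → Ordinal)
        = A' j ∪ (univ.filter fun i : Fin m => t i.succ = j).image v := by
      ext x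
      rcases eq_or_ne j (t 0) with rfl | hj
      · simp [A', Fin.exists_fin_succ, eq_comm (a := x), or_left_comm]
      · simp [A', Fin.exists_fin_succ, hj, Ne.symm hj]
    exact himage ▸ hvA j

theorem exists_isFirstN_not_extendable {A : Set Ordinal} (hA : A.Infinite)
    (hbound : ∀ c ∈ A, c < L ∧ BoundsExtensions T L c) :
    ∀ k r, ¬ Extendable T L (k + r) ∅ → ∃ F, IsFirstN A k F ∧ ¬ Extendable T L r F
  | 0, r, h => ⟨∅, by simp [IsFirstN], by simpa using h⟩
  | k + 1, r, h => by
    obtain ⟨F, hF, hFbad⟩ :=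
      exists_isFirstN_not_extendable hA hbound k (r + 1) (by rwa [← add_assoc, add_right_comm])
    obtain ⟨c, hcA, hFc, hF'⟩ := hF.exists_insert hA
    refine ⟨insert c F, hF', fun hext => ?_⟩
    exact lt_irrefl c ((hbound c hcA).2 (r + 1) F hFc hFbad c ⟨(hbound c hcA).1, hext⟩)

end Extendable

theorem extendable_empty_of_guessing {lam : Cardinal.{0}} (hlam : lam.IsRegular)
    (hunc : ℵ₀ < lam) {S : Set Ordinal} {C : Ordinal → Set Ordinal}
    (hC : ∀ δ ∈ S, C δ ⊆ Set.Iio δ ∧ (C δ).Infinite)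
    (hguess : ∀ D : Set Ordinal, IsClubIn D lam.ord →
      IsStationaryIn {δ ∈ S | C δ ⊆ D} lam.ord) (n : ℕ) :
    Extendable (fun P => {γ ∈ S | IsFirstN (C γ) n P}) lam.ord n ∅ := by
  classical
  set T : Finset Ordinal → Set Ordinal := fun P => {γ ∈ S | IsFirstN (C γ) n P}
  set L := lam.ord
  by_contra hbad
  let f : ℕ → Finset Ordinal → Ordinal := fun r P =>
    if Extendable T L r P then 0 else sSup (extensionSet T L r P)
  have hf (r P) : f r P < L := by
    by_cases h : Extendable T L r P
    · simp only [f, if_pos h]; exact Cardinal.ord_pos.2 (aleph0_pos.trans hunc)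
    · simp only [f, if_neg h]; exact (bddAbove_and_csSup_lt_of_not_unboundedIn h).2
  have hD := isClubIn_closurePoints hlam hunc f hf
  obtain ⟨δ, ⟨hδS, hδD⟩, -⟩ := hguess _ hD _ hD
  have hbound : ∀ c ∈ C δ, c < L ∧ BoundsExtensions T L c := fun c hc =>
    ⟨(hδD hc).1, fun r P hP hr x hx => by
      have hfc : f r P < c := (hδD hc).2 r P hP
      simp only [f, if_neg hr] at hfc
      exact (le_csSup (bddAbove_and_csSup_lt_of_not_unboundedIn hr).1 hx).trans_lt hfc⟩
  obtain ⟨hCδ, hinf⟩ := hC δ hδS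
  obtain ⟨F, hF, hFbad⟩ := exists_isFirstN_not_extendable hinf hbound n 0 hbad
  obtain ⟨c, hcC, hFc, -⟩ := hF.exists_insert hinf
  exact (hCδ hcC).not_gt ((hbound c hcC).2 0 F hFc hFbad δ ⟨hδS, hF⟩)

theorem IsDisjointType.card_filter_eq {n : ℕ} {t : Fin (2 * n) → Fin 2}
    (ht : IsDisjointType n t) (j : Fin 2) : (univ.filter (t · = j)).card = n := by
  fin_cases j
  · exact ht
  · have hsum := card_filter_add_card_filter_not (s := univ) (t · = 0)
    have hone : univ.filter (t · = 1) = univ.filter (¬ t · = 0) :=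
      filter_congr fun i _ => by omega
    simp only [card_univ, Fintype.card_fin] at hsum
    rw [IsDisjointType] at ht
    simp only [Fin.mk_one, hone]
    omega

theorem hasType_image {n : ℕ} {t : Fin (2 * n) → Fin 2} (ht : IsDisjointType n t)
    {v : Fin (2 * n) → Ordinal} (hv : StrictMono v) :
    HasType n ((univ.filter (t · = 0)).image v) ((univ.filter (t · = 1)).image v) t := by
  have hunion : (univ.filter (t · = 0)).image v ∪ (univ.filter (t · = 1)).image v
      = univ.image v := by
    rw [← image_union, ← filter_or, filter_true_of_mem fun i _ => by omega]
  have hU : ((univ.filter (t · = 0)).image v ∪ (univ.filter (t · = 1)).image v).card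
      = 2 * n := by
    rw [hunion, card_image_of_injective _ hv.injective, card_univ, Fintype.card_fin]
  refine ⟨by rw [card_image_of_injective _ hv.injective, ht.card_filter_eq],
    by rw [card_image_of_injective _ hv.injective, ht.card_filter_eq], hU, fun i => ?_⟩
  rw [coe_orderIsoOfFin_apply, ← orderEmbOfFin_unique hU
    (fun i => hunion ▸ mem_image_of_mem v (mem_univ i)) hv, hv.injective.mem_finset_image]
  simp

theorem club_guessing_realizes_types_general (lam : Cardinal.{0}) (hlam : lam.IsRegular)
    (hunc : Cardinal.aleph0 < lam)
    (S : Set Ordinal) (hS : S ⊆ {α : Ordinal | α < lam.ord ∧ α.cof = Cardinal.aleph0})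
    (C : Ordinal → Set Ordinal)
    (hC : ∀ δ ∈ S, IsClubIn (C δ) δ ∧ setOtp (C δ) = Ordinal.omega0)
    (hguess : ∀ D : Set Ordinal, IsClubIn D lam.ord →
      IsStationaryIn {δ ∈ S | C δ ⊆ D} lam.ord)
    (n : ℕ) (t : Fin (2 * n) → Fin 2) (ht : IsDisjointType n t) :
    ∃ γ ∈ S, ∃ δ ∈ S, γ < δ ∧
      ∃ Fγ Fδ : Finset Ordinal, IsFirstN (C γ) n Fγ ∧ IsFirstN (C δ) n Fδ ∧
        Disjoint Fγ Fδ ∧ HasType n Fγ Fδ t := by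
  have hL : 0 < lam.ord := Cardinal.ord_pos.2 (aleph0_pos.trans hunc)
  have hCinf (δ) (hδ : δ ∈ S) : C δ ⊆ Set.Iio δ ∧ (C δ).Infinite :=
    ⟨(hC δ hδ).1.1, (hC δ hδ).1.infinite fun h0 =>
      aleph0_ne_zero (by simpa [h0] using (hS hδ).2.symm)⟩
  have hext := extendable_empty_of_guessing hlam hunc hCinf hguess n
  obtain ⟨v, hv, -, hvA⟩ := exists_strictMono_extendable_zero t (fun _ => ∅) hL
    fun j => by rw [ht.card_filter_eq j]; exact hext
  simp only [empty_union] at hvA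
  obtain ⟨γ, ⟨hγS, hγ⟩, -⟩ := hvA 0 0 hL
  obtain ⟨δ, ⟨hδS, hδ⟩, hγδ⟩ := hvA 1 γ (hS hγS).1
  refine ⟨γ, hγS, δ, hδS, hγδ, _, _, hγ, hδ, ?_, hasType_image ht hv⟩
  exact (disjoint_image hv.injective).2 (disjoint_filter.2 fun i _ h0 h1 => by simp [h0] at h1)

/-- If `λ` is an uncountable regular cardinal, `S ⊆ S^λ_ω` is stationary, and
`⟨C_δ : δ ∈ S⟩` is a club-guessing sequence on `S`, then for every `n` and every disjoint
type `t` of length `n` there are `γ < δ` in `S` such that `C_γ[n]` and `C_δ[n]` are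
disjoint and `tp(C_γ[n], C_δ[n]) = t`. -/
theorem club_guessing_realizes_types (lam : Cardinal.{0}) (hlam : lam.IsRegular)
    (hunc : Cardinal.aleph0 < lam)
    (S : Set Ordinal) (hS : S ⊆ {α : Ordinal | α < lam.ord ∧ α.cof = Cardinal.aleph0})
    (hstat : IsStationaryIn S lam.ord)
    (C : Ordinal → Set Ordinal)
    (hC : ∀ δ ∈ S, IsClubIn (C δ) δ ∧ setOtp (C δ) = Ordinal.omega0)
    (hguess : ∀ D : Set Ordinal, IsClubIn D lam.ord →
      IsStationaryIn {δ ∈ S | C δ ⊆ D} lam.ord)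
    (n : ℕ) (t : Fin (2 * n) → Fin 2) (ht : IsDisjointType n t) :
    ∃ γ ∈ S, ∃ δ ∈ S, γ < δ ∧
      ∃ Fγ Fδ : Finset Ordinal, IsFirstN (C γ) n Fγ ∧ IsFirstN (C δ) n Fδ ∧
        Disjoint Fγ Fδ ∧ HasType n Fγ Fδ t :=
  club_guessing_realizes_types_general lam hlam hunc S hS C hC hguess n t ht
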